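/- arXiv:1412.1126 — 4 statements merged into one kernel-verified Lean document; each statement's English description precedes it below -/
import Mathlib

section
/- For every h with −1/4 < h < 0, the level set {(x,y) ∈ ℝ² : H(x,y) = h} is a nonempty compact set having exactly two connected components, one contained in the half-plane {x > 0} and one contained in the half-plane {x < 0}. -/
/-- The Hamiltonian of the unperturbed Duffing equation: H(x,y) = y²/2 − x²/2 + x⁴/4. -/
noncomputable def H (x y : ℝ) : ℝ := y ^ 2 / 2 - x ^ 2 / 2 + x ^ 4 / 4

lemma duffing_bound (h x y : ℝ) (h₂ : h < 0) (hp : y ^ 2 = 2*h + x^2 - x^4/2) :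
    -2 ≤ x ∧ x ≤ 2 ∧ -2 ≤ y ∧ y ≤ 2 := by
  have hx2 : x^2 ≤ 2 := by nlinarith [sq_nonneg y, sq_nonneg x, sq_nonneg (x^2 - 1)]
  have hy2' : y^2 ≤ 2 := by nlinarith [sq_nonneg (x^2)]
  refine ⟨by nlinarith [sq_nonneg (x+2)], by nlinarith [sq_nonneg (x-2)],
    by nlinarith [sq_nonneg (y+2)], by nlinarith [sq_nonneg (y-2)]⟩

/-- For −1/4 < h < 0, the level set {H = h} is a nonempty compact set with exactly two
connected components, one in the half-plane {x > 0} and one in {x < 0}. -/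
theorem level_set_two_components (h : ℝ) (h₁ : -1/4 < h) (h₂ : h < 0) :
    ({p : ℝ × ℝ | H p.1 p.2 = h}).Nonempty ∧
    IsCompact {p : ℝ × ℝ | H p.1 p.2 = h} ∧
    ∃ A B : Set (ℝ × ℝ),
      IsConnected A ∧ IsConnected B ∧ Disjoint A B ∧
      A ∪ B = {p : ℝ × ℝ | H p.1 p.2 = h} ∧
      A ⊆ {p : ℝ × ℝ | 0 < p.1} ∧ B ⊆ {p : ℝ × ℝ | p.1 < 0} ∧
      (∀ C ⊆ {p : ℝ × ℝ | H p.1 p.2 = h}, IsConnected C → C ⊆ A ∨ C ⊆ B) := by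
  have h4 : (0:ℝ) < 1 + 4*h := by linarith
  set s := Real.sqrt (1 + 4*h) with hs_def
  have hs2 : s^2 = 1 + 4*h := Real.sq_sqrt h4.le
  have hs0 : 0 < s := Real.sqrt_pos.mpr h4
  have hs1 : s < 1 := by nlinarith
  set a := Real.sqrt (1 - s) with ha_def
  set b := Real.sqrt (1 + s) with hb_def
  have ha2 : a^2 = 1 - s := Real.sq_sqrt (by linarith)
  have hb2 : b^2 = 1 + s := Real.sq_sqrt (by linarith)
  have ha0 : 0 < a := Real.sqrt_pos.mpr (by linarith)
  have hb0 : 0 < b := Real.sqrt_pos.mpr (by linarith)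
  have hab : a ≤ b := Real.sqrt_le_sqrt (by linarith)
  set f : ℝ → ℝ := fun x => 2*h + x^2 - x^4/2 with hf_def
  have hfact : ∀ x : ℝ, f x = -(1/2) * (x^2 - (1-s)) * (x^2 - (1+s)) := by
    intro x
    simp only [hf_def]
    linear_combination (-(1/2 : ℝ)) * hs2
  set g : ℝ → ℝ := fun x => Real.sqrt (f x) with hg_def
  have hgcont : Continuous g := by
    apply Real.continuous_sqrt.comp
    simp only [hf_def]
    fun_prop
  -- equivalent form of the level equation
  have hHiff : ∀ x y : ℝ, H x y = h ↔ y^2 = f x := by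
    intro x y
    simp only [H, hf_def]
    constructor <;> intro hxy <;> linarith
  -- the two sets
  set A : Set (ℝ × ℝ) := {p : ℝ × ℝ | H p.1 p.2 = h ∧ 0 < p.1} with hA_def
  set B : Set (ℝ × ℝ) := {p : ℝ × ℝ | H p.1 p.2 = h ∧ p.1 < 0} with hB_def
  -- A as a union of two graphs
  have hAeq : A = (fun x => (x, g x)) '' Set.Icc a b ∪ (fun x => (x, -g x)) '' Set.Icc a b := by
    ext ⟨x, y⟩
    simp only [hA_def, Set.mem_setOf_eq, Set.mem_union, Set.mem_image, Set.mem_Icc, Prod.mk.injEq]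
    constructor
    · rintro ⟨hH, hx⟩
      have hy2 : y^2 = f x := (hHiff x y).mp hH
      have hy2' : y^2 = -(1/2) * (x^2 - (1-s)) * (x^2 - (1+s)) := by
        rw [hy2, hfact]
      have hx2u : x^2 ≤ 1 + s := by nlinarith [sq_nonneg y, hs0]
      have hx2l : 1 - s ≤ x^2 := by nlinarith [sq_nonneg y, hs0]
      have hax : a ≤ x := by
        rw [ha_def, ← Real.sqrt_sq hx.le]
        exact Real.sqrt_le_sqrt hx2l
      have hxb : x ≤ b := by
        rw [hb_def, ← Real.sqrt_sq hx.le]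
        exact Real.sqrt_le_sqrt hx2u
      have habs : g x = |y| := by
        rw [hg_def]
        simp only
        rw [← hy2, Real.sqrt_sq_eq_abs]
      rcases abs_choice y with hy | hy
      · left; exact ⟨x, ⟨hax, hxb⟩, rfl, by rw [habs, hy]⟩
      · right; exact ⟨x, ⟨hax, hxb⟩, rfl, by rw [habs, hy]; ring⟩
    · have key : ∀ t, a ≤ t → t ≤ b → (H t (g t) = h ∧ 0 < t) ∧ (H t (-(g t)) = h ∧ 0 < t) := by
        intro t hat htb
        have ht0 : 0 < t := lt_of_lt_of_le ha0 hat
        have ht2l : 1 - s ≤ t^2 := by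
          rw [← ha2]; exact pow_le_pow_left₀ ha0.le hat 2
        have ht2u : t^2 ≤ 1 + s := by
          rw [← hb2]; exact pow_le_pow_left₀ ht0.le htb 2
        have hft : 0 ≤ f t := by
          rw [hfact]; nlinarith
        have hgt2 : (g t)^2 = f t := Real.sq_sqrt hft
        constructor
        · exact ⟨(hHiff t (g t)).mpr hgt2, ht0⟩
        · refine ⟨(hHiff t (-(g t))).mpr ?_, ht0⟩
          rw [neg_pow]; simpa using hgt2
      rintro (⟨t, ⟨hat, htb⟩, rfl, rfl⟩ | ⟨t, ⟨hat, htb⟩, rfl, rfl⟩)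
      · exact (key t hat htb).1
      · exact (key t hat htb).2
  -- A is connected
  have hAconn : IsConnected A := by
    rw [hAeq]
    have hU : IsConnected ((fun x => (x, g x)) '' Set.Icc a b) :=
      (isConnected_Icc hab).image _ (Continuous.continuousOn (by fun_prop))
    have hL : IsConnected ((fun x => (x, -g x)) '' Set.Icc a b) :=
      (isConnected_Icc hab).image _ (Continuous.continuousOn (by fun_prop))
    have hfa : f a = 0 := by rw [hfact, ha2]; ring
    have hga : g a = 0 := by rw [hg_def]; simp [hfa]
    refine IsConnected.union ⟨(a, 0), ?_, ?_⟩ hU hL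
    · exact ⟨a, Set.left_mem_Icc.mpr hab, by simp [hga]⟩
    · exact ⟨a, Set.left_mem_Icc.mpr hab, by simp [hga]⟩
  -- B is the mirror image of A
  have hHsymm : ∀ x y : ℝ, H (-x) y = H x y := by
    intro x y; simp only [H]; ring
  have hBeq : B = (fun p : ℝ × ℝ => (-p.1, p.2)) '' A := by
    ext ⟨x, y⟩
    simp only [hB_def, hA_def, Set.mem_setOf_eq, Set.mem_image, Prod.mk.injEq, Prod.exists]
    constructor
    · rintro ⟨hH, hx⟩
      exact ⟨-x, y, ⟨by rw [hHsymm]; exact hH, by linarith⟩, by ring, rfl⟩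
    · rintro ⟨u, v, ⟨hH, hu⟩, rfl, rfl⟩
      exact ⟨by rw [hHsymm]; exact hH, by linarith⟩
  have hBconn : IsConnected B := by
    rw [hBeq]
    exact hAconn.image _ (Continuous.continuousOn (by fun_prop))
  -- disjointness and half-plane containment
  have hAsub : A ⊆ {p : ℝ × ℝ | 0 < p.1} := fun p hp => hp.2
  have hBsub : B ⊆ {p : ℝ × ℝ | p.1 < 0} := fun p hp => hp.2
  have hdisj : Disjoint A B := by
    rw [Set.disjoint_left]
    rintro p ⟨_, hp⟩ ⟨_, hq⟩
    linarith
  -- no point of the level set has x = 0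
  have hx_ne : ∀ p : ℝ × ℝ, H p.1 p.2 = h → p.1 ≠ 0 := by
    rintro ⟨x, y⟩ hH hx0
    simp only at hx0
    subst hx0
    simp only [H] at hH
    nlinarith [sq_nonneg y]
  have hunion : A ∪ B = {p : ℝ × ℝ | H p.1 p.2 = h} := by
    ext p
    simp only [hA_def, hB_def, Set.mem_union, Set.mem_setOf_eq]
    constructor
    · rintro (⟨hH, _⟩ | ⟨hH, _⟩) <;> exact hH
    · intro hH
      rcases lt_trichotomy p.1 0 with hx | hx | hx
      · exact Or.inr ⟨hH, hx⟩
      · exact absurd hx (hx_ne p hH)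
      · exact Or.inl ⟨hH, hx⟩
  -- nonempty
  have hnon : ({p : ℝ × ℝ | H p.1 p.2 = h}).Nonempty := by
    refine ⟨(b, 0), ?_⟩
    simp only [Set.mem_setOf_eq, H]
    linear_combination ((b^2 + s - 1)/4) * hb2 + (1/4 : ℝ) * hs2
  -- compactness
  have hHcont : Continuous fun p : ℝ × ℝ => H p.1 p.2 := by
    simp only [H]; fun_prop
  have hclosed : IsClosed {p : ℝ × ℝ | H p.1 p.2 = h} :=
    isClosed_eq hHcont continuous_const
  have hbdd : {p : ℝ × ℝ | H p.1 p.2 = h} ⊆ Set.Icc ((-2, -2) : ℝ × ℝ) (2, 2) := by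
    rintro ⟨x, y⟩ hp
    simp only [Set.mem_setOf_eq] at hp
    have hy2 : y^2 = f x := (hHiff x y).mp hp
    simp only [hf_def] at hy2
    obtain ⟨hxl, hxu, hyl, hyu⟩ := duffing_bound h x y h₂ hy2
    simp only [Set.mem_Icc, Prod.mk_le_mk]
    exact ⟨⟨hxl, hyl⟩, ⟨hxu, hyu⟩⟩
  have hcpt : IsCompact {p : ℝ × ℝ | H p.1 p.2 = h} :=
    (isCompact_Icc).of_isClosed_subset hclosed hbdd
  refine ⟨hnon, hcpt, A, B, hAconn, hBconn, hdisj, hunion, hAsub, hBsub, ?_⟩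
  -- maximality
  intro C hC hCconn
  have hCsub : C ⊆ {p : ℝ × ℝ | 0 < p.1} ∪ {p : ℝ × ℝ | p.1 < 0} := by
    intro p hp
    have : p ∈ A ∪ B := hunion ▸ hC hp
    rcases this with hpA | hpB
    · exact Or.inl (hAsub hpA)
    · exact Or.inr (hBsub hpB)
  have hopen1 : IsOpen {p : ℝ × ℝ | 0 < p.1} := isOpen_lt continuous_const continuous_fst
  have hopen2 : IsOpen {p : ℝ × ℝ | p.1 < 0} := isOpen_lt continuous_fst continuous_const
  have hdisj' : Disjoint {p : ℝ × ℝ | 0 < p.1} {p : ℝ × ℝ | p.1 < 0} := by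
    rw [Set.disjoint_left]
    rintro p hp hq
    simp only [Set.mem_setOf_eq] at hp hq
    linarith
  rcases hCconn.isPreconnected.subset_or_subset hopen1 hopen2 hdisj' hCsub with hC1 | hC2
  · left
    intro p hp
    have hpAB : p ∈ A ∪ B := hunion ▸ hC hp
    rcases hpAB with hpA | hpB
    · exact hpA
    · have e1 : (0:ℝ) < p.1 := hC1 hp
      have e2 : p.1 < 0 := hBsub hpB
      linarith
  · right
    intro p hp
    have hpAB : p ∈ A ∪ B := hunion ▸ hC hp
    rcases hpAB with hpA | hpB
    · have e1 : p.1 < 0 := hC2 hp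
      have e2 : (0:ℝ) < p.1 := hAsub hpA
      linarith
    · exact hpB
end

section
/- For every real a, the improper integral ∫_{−∞}^{∞} sech³(t)·cos(a t) dt equals π(1 + a²) / (2·cosh(πa/2)). -/
/-!
The substitution `x = sigmoid (2 t) = eᵗ / (2 cosh t)`, under which `1 - x = e⁻ᵗ / (2 cosh t)` and
`dx = 2 x (1 - x) dt`, turns Euler's Beta integral into
`B(u, v) = 2 ∫ e^{(u - v) t} (2 cosh t)^{-(u + v)} dt`. For `u, v = (3 ± i a) / 2` the integrand is
`sech³ t · e^{i a t} / 8`, and `B(u, v) = Γ(u) Γ(v) / Γ(3)` is evaluated by the recurrence and the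
reflection formula for `Γ`, with `sin (π (1 + i a) / 2) = cosh (π a / 2)`.
-/

open MeasureTheory Real Set

section Sigmoid

variable {E : Type*} [NormedAddCommGroup E] [NormedSpace ℝ E]

lemma abs_sigmoid_mul_one_sub_sigmoid (s : ℝ) :
    |sigmoid s * (1 - sigmoid s)| = sigmoid s * (1 - sigmoid s) :=
  abs_of_pos <| mul_pos (sigmoid_pos s) (sub_pos.2 (sigmoid_lt_one s))

lemma integral_Ioo_zero_one_eq_integral_comp_sigmoid (g : ℝ → E) :
    ∫ x in Ioo 0 1, g x = ∫ s, (sigmoid s * (1 - sigmoid s)) • g (sigmoid s) := by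
  have := integral_image_eq_integral_abs_deriv_smul MeasurableSet.univ
    (fun s _ => (hasDerivAt_sigmoid s).hasDerivWithinAt) sigmoid_injective.injOn g
  simpa only [image_univ, range_sigmoid, setIntegral_univ, abs_sigmoid_mul_one_sub_sigmoid]
    using this

lemma integrableOn_Ioo_zero_one_iff_integrable_comp_sigmoid (g : ℝ → E) :
    IntegrableOn g (Ioo 0 1) ↔
      Integrable fun s => (sigmoid s * (1 - sigmoid s)) • g (sigmoid s) := by
  have := integrableOn_image_iff_integrableOn_abs_deriv_smul MeasurableSet.univ
    (fun s _ => (hasDerivAt_sigmoid s).hasDerivWithinAt) sigmoid_injective.injOn g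
  simpa only [image_univ, range_sigmoid, integrableOn_univ, abs_sigmoid_mul_one_sub_sigmoid]
    using this

end Sigmoid

lemma sigmoid_mul_one_sub_sigmoid_smul_betaIntegrand (u v : ℂ) (s : ℝ) :
    (sigmoid s * (1 - sigmoid s)) •
        ((sigmoid s : ℂ) ^ (u - 1) * (1 - (sigmoid s : ℂ)) ^ (v - 1))
      = (sigmoid s : ℂ) ^ u * (sigmoid (-s) : ℂ) ^ v := by
  have h₀ : (sigmoid s : ℂ) ≠ 0 := by exact_mod_cast (sigmoid_pos s).ne'
  have h₁ : 1 - (sigmoid s : ℂ) ≠ 0 := by exact_mod_cast (sub_pos.2 (sigmoid_lt_one s)).ne'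
  rw [Complex.real_smul, sigmoid_neg, Complex.cpow_sub _ _ h₀, Complex.cpow_sub _ _ h₁,
    Complex.cpow_one, Complex.cpow_one]
  push_cast
  field_simp

lemma betaIntegral_eq_integral_Ioo (u v : ℂ) :
    Complex.betaIntegral u v
      = ∫ x in Ioo (0 : ℝ) 1, (x : ℂ) ^ (u - 1) * (1 - (x : ℂ)) ^ (v - 1) := by
  rw [Complex.betaIntegral, intervalIntegral.integral_of_le zero_le_one,
    integral_Ioc_eq_integral_Ioo]

lemma integrable_sigmoid_cpow_mul_sigmoid_neg_cpow {u v : ℂ} (hu : 0 < u.re) (hv : 0 < v.re) :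
    Integrable fun s : ℝ => (sigmoid s : ℂ) ^ u * (sigmoid (-s) : ℂ) ^ v := by
  have hIoo := ((intervalIntegrable_iff_integrableOn_Ioc_of_le zero_le_one).1
    (Complex.betaIntegral_convergent hu hv)).mono_set Ioo_subset_Ioc_self
  simpa only [integrableOn_Ioo_zero_one_iff_integrable_comp_sigmoid,
    sigmoid_mul_one_sub_sigmoid_smul_betaIntegrand] using hIoo

lemma integral_sigmoid_cpow_mul_sigmoid_neg_cpow (u v : ℂ) :
    ∫ s : ℝ, (sigmoid s : ℂ) ^ u * (sigmoid (-s) : ℂ) ^ v = Complex.betaIntegral u v := by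
  simp only [betaIntegral_eq_integral_Ioo, integral_Ioo_zero_one_eq_integral_comp_sigmoid,
    sigmoid_mul_one_sub_sigmoid_smul_betaIntegrand]

lemma sigmoid_two_mul (t : ℝ) : sigmoid (2 * t) = exp t / (2 * cosh t) := by
  rw [sigmoid_def, cosh_eq, show -(2 * t) = -t - t by ring, Real.exp_sub]
  field_simp

lemma ofReal_exp_div_cpow (t : ℝ) {c : ℝ} (hc : 0 < c) (w : ℂ) :
    ((exp t / c : ℝ) : ℂ) ^ w = Complex.exp (t * w) / (c : ℂ) ^ w := by
  have hc' : (c : ℂ) ≠ 0 := by exact_mod_cast hc.ne'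
  rw [Complex.cpow_def_of_ne_zero (by exact_mod_cast (div_pos (exp_pos t) hc).ne'),
    Complex.cpow_def_of_ne_zero hc', ← Complex.ofReal_log (div_pos (exp_pos t) hc).le,
    ← Complex.ofReal_log hc.le, Real.log_div (exp_pos t).ne' hc.ne', Real.log_exp,
    Complex.ofReal_sub, sub_mul, Complex.exp_sub]

lemma sigmoid_two_mul_cpow_mul_sigmoid_neg_cpow (u v : ℂ) (t : ℝ) :
    (sigmoid (2 * t) : ℂ) ^ u * (sigmoid (-(2 * t)) : ℂ) ^ v
      = Complex.exp ((u - v) * t) / (2 * cosh t : ℂ) ^ (u + v) := by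
  have hc : 0 < 2 * cosh t := by positivity
  have hc' : (2 * cosh t : ℂ) ≠ 0 := by exact_mod_cast hc.ne'
  rw [← mul_neg, sigmoid_two_mul, sigmoid_two_mul, cosh_neg, ofReal_exp_div_cpow t hc,
    ofReal_exp_div_cpow (-t) hc, Complex.cpow_add _ _ hc']
  push_cast
  rw [div_mul_div_comm, ← Complex.exp_add]
  ring_nf

lemma integrable_cexp_mul_div_two_cosh_cpow {u v : ℂ} (hu : 0 < u.re) (hv : 0 < v.re) :
    Integrable fun t : ℝ => Complex.exp ((u - v) * t) / (2 * cosh t : ℂ) ^ (u + v) := by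
  simpa only [sigmoid_two_mul_cpow_mul_sigmoid_neg_cpow] using
    (integrable_sigmoid_cpow_mul_sigmoid_neg_cpow hu hv).comp_mul_left' two_ne_zero

lemma integral_cexp_mul_div_two_cosh_cpow (u v : ℂ) :
    ∫ t : ℝ, Complex.exp ((u - v) * t) / (2 * cosh t : ℂ) ^ (u + v)
      = Complex.betaIntegral u v / 2 := by
  have := Measure.integral_comp_mul_left
    (fun s : ℝ => (sigmoid s : ℂ) ^ u * (sigmoid (-s) : ℂ) ^ v) 2
  simp only [sigmoid_two_mul_cpow_mul_sigmoid_neg_cpow,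
    integral_sigmoid_cpow_mul_sigmoid_neg_cpow] at this
  rw [this, abs_of_pos (by norm_num), Complex.real_smul]
  push_cast
  ring

lemma betaIntegral_add_one_two_sub {w : ℂ} (h₀ : 0 < w.re) (h₁ : w.re < 1) :
    Complex.betaIntegral (w + 1) (2 - w)
      = π * w * (1 - w) / (2 * Complex.sin (π * w)) := by
  have hw : w ≠ 0 := fun h => by simp [h] at h₀
  have hw' : 1 - w ≠ 0 := fun h => by
    have := congrArg Complex.re h
    simp at this
    linarith
  have hΓ := Complex.Gamma_mul_Gamma_eq_betaIntegral (s := w + 1) (t := 2 - w)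
    (by simp; linarith) (by simp; linarith)
  have hΓ₃ : Complex.Gamma (w + 1 + (2 - w)) = 2 := by
    rw [show w + 1 + (2 - w) = (2 : ℕ) + 1 by push_cast; ring, Complex.Gamma_nat_eq_factorial]
    norm_num
  rw [hΓ₃, Complex.Gamma_add_one w hw, show (2 : ℂ) - w = (1 - w) + 1 by ring,
    Complex.Gamma_add_one _ hw', ← show (2 : ℂ) - w = (1 - w) + 1 by ring] at hΓ
  linear_combination (w * (1 - w) / 2) * Complex.Gamma_mul_Gamma_one_sub w - hΓ / 2

lemma sin_pi_mul_one_add_mul_I_div_two (a : ℝ) :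
    Complex.sin (π * ((1 + a * Complex.I) / 2)) = cosh (π * a / 2) := by
  rw [show (π : ℂ) * ((1 + a * Complex.I) / 2) = π / 2 + (π * a / 2 : ℝ) * Complex.I by
      push_cast; ring,
    Complex.sin_add_mul_I, Complex.sin_pi_div_two, Complex.cos_pi_div_two, Complex.ofReal_cosh]
  ring

lemma betaIntegral_three_add_mul_I_div_two (a : ℝ) :
    Complex.betaIntegral ((3 + a * Complex.I) / 2) ((3 - a * Complex.I) / 2)
      = (π * (1 + a ^ 2) / (8 * cosh (π * a / 2)) : ℝ) := by
  set w : ℂ := (1 + a * Complex.I) / 2 with hw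
  have hprod : w * (1 - w) = ((1 + a ^ 2) / 4 : ℝ) := by
    rw [hw]; push_cast; linear_combination (-(a : ℂ) ^ 2 / 4) * Complex.I_sq
  rw [show (3 + a * Complex.I) / 2 = w + 1 by ring, show (3 - a * Complex.I) / 2 = 2 - w by ring,
    betaIntegral_add_one_two_sub (by simp [hw]) (by norm_num [hw]), mul_assoc, hprod,
    sin_pi_mul_one_add_mul_I_div_two]
  push_cast
  ring

lemma sech_pow_three_mul_cexp_eq (a t : ℝ) :
    (((1 / cosh t) ^ 3 : ℝ) : ℂ) * Complex.exp ((a * t : ℝ) * Complex.I)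
      = 8 * (Complex.exp (((3 + a * Complex.I) / 2 - (3 - a * Complex.I) / 2) * t)
          / (2 * cosh t : ℂ) ^ ((3 + a * Complex.I) / 2 + (3 - a * Complex.I) / 2)) := by
  rw [show (3 + a * Complex.I) / 2 + (3 - a * Complex.I) / 2 = 3 by ring, Complex.cpow_ofNat]
  push_cast
  ring_nf

lemma integrable_sech_pow_three_mul_cexp (a : ℝ) :
    Integrable fun t : ℝ =>
      (((1 / cosh t) ^ 3 : ℝ) : ℂ) * Complex.exp ((a * t : ℝ) * Complex.I) := by
  simp_rw [sech_pow_three_mul_cexp_eq]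
  exact (integrable_cexp_mul_div_two_cosh_cpow (by norm_num) (by norm_num)).const_mul 8

lemma integral_sech_pow_three_mul_cexp (a : ℝ) :
    ∫ t : ℝ, (((1 / cosh t) ^ 3 : ℝ) : ℂ) * Complex.exp ((a * t : ℝ) * Complex.I)
      = (π * (1 + a ^ 2) / (2 * cosh (π * a / 2)) : ℝ) := by
  simp_rw [sech_pow_three_mul_cexp_eq, integral_const_mul, integral_cexp_mul_div_two_cosh_cpow,
    betaIntegral_three_add_mul_I_div_two]
  push_cast
  ring

/-- For every real a, ∫ sech³(t)·cos(a t) dt over ℝ equals π(1 + a²)/(2·cosh(πa/2)). -/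
theorem integral_sech_cube_cos (a : ℝ) :
    ∫ t : ℝ, (1 / Real.cosh t) ^ 3 * Real.cos (a * t)
      = Real.pi * (1 + a ^ 2) / (2 * Real.cosh (Real.pi * a / 2)) := by
  calc ∫ t : ℝ, (1 / cosh t) ^ 3 * cos (a * t)
      = ∫ t : ℝ, ((((1 / cosh t) ^ 3 : ℝ) : ℂ) * Complex.exp ((a * t : ℝ) * Complex.I)).re := by
        congr 1 with t
        rw [Complex.re_ofReal_mul, Complex.exp_ofReal_mul_I_re]
    _ = (∫ t : ℝ, (((1 / cosh t) ^ 3 : ℝ) : ℂ) * Complex.exp ((a * t : ℝ) * Complex.I)).re :=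
        integral_re (integrable_sech_pow_three_mul_cexp a)
    _ = π * (1 + a ^ 2) / (2 * cosh (π * a / 2)) := by
        rw [integral_sech_pow_three_mul_cexp, Complex.ofReal_re]
end

section
/- For every real a, the improper integral ∫_{−∞}^{∞} sech³(t)·tanh(t)·sin(a t) dt equals π·a·(1 + a²) / (6·cosh(πa/2)). -/
/-!
Substituting `x = σ(2t)` (`σ` the logistic sigmoid) turns the Beta integral `B(s, 1 - s)` with
`s = (1 + a i) / 2` into `∫ e^{iat} / cosh t`, and Euler's reflection formula evaluates it as
`π / sin (π s) = π / cosh (π a / 2)`. The rest is integration by parts against `sin (a t)` and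
`cos (a t)`: since `sech³ · tanh = -(sech³)' / 3`, the integral equals
`a / 3 · ∫ cos (a t) sech³ t`, and `(sechⁿ · tanh)' = (n + 1) sechⁿ⁺² - n sechⁿ` gives
`∫ cos (a t) sechⁿ⁺² t = (n² + a²) / (n (n + 1)) · ∫ cos (a t) sechⁿ t`.
-/

open MeasureTheory Real

theorem Complex.betaIntegral_eq_integral_sigmoid (u v : ℂ) :
    betaIntegral u v = ∫ x : ℝ, (sigmoid x : ℂ) ^ u * (sigmoid (-x) : ℂ) ^ v := by
  rw [betaIntegral, intervalIntegral.integral_of_le zero_le_one, integral_Ioc_eq_integral_Ioo,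
    ← range_sigmoid, ← Set.image_univ,
    integral_image_eq_integral_abs_deriv_smul MeasurableSet.univ
      (fun x _ => (hasDerivAt_sigmoid x).hasDerivWithinAt) sigmoid_injective.injOn,
    setIntegral_univ]
  congr 1 with x
  have h0 : (sigmoid x : ℂ) ≠ 0 := by exact_mod_cast (sigmoid_pos x).ne'
  have h1 : 1 - (sigmoid x : ℂ) ≠ 0 := by exact_mod_cast (sub_pos.2 (sigmoid_lt_one x)).ne'
  rw [abs_of_pos (mul_pos (sigmoid_pos x) (sub_pos.2 (sigmoid_lt_one x))), real_smul]
  push_cast [sigmoid_neg]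
  rw [cpow_sub _ _ h0, cpow_sub _ _ h1, cpow_one, cpow_one]
  field_simp

theorem Real.sigmoid_mul_two_mul_cosh_half (x : ℝ) :
    sigmoid x * (2 * cosh (x / 2)) = exp (x / 2) := by
  have hsq : exp (-x) = exp (-(x / 2)) * exp (-(x / 2)) := by rw [← exp_add]; ring_nf
  have hinv : exp (x / 2) * exp (-(x / 2)) = 1 := by rw [← exp_add]; simp
  rw [sigmoid_def, cosh_eq, hsq]
  field_simp
  linear_combination -exp (-(x / 2)) * hinv

theorem Real.sigmoid_cpow_mul_sigmoid_neg_cpow_one_sub (s : ℂ) (x : ℝ) :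
    (sigmoid x : ℂ) ^ s * (sigmoid (-x) : ℂ) ^ (1 - s)
      = Complex.exp ((s - 1 / 2) * x) / (2 * cosh (x / 2)) := by
  have hσ : (sigmoid x : ℂ) ≠ 0 := by exact_mod_cast (sigmoid_pos x).ne'
  have hexp : ((exp (-x) : ℝ) : ℂ) ^ (1 - s) = Complex.exp (-x * (1 - s)) := by
    rw [Complex.cpow_def_of_ne_zero (by exact_mod_cast (exp_pos _).ne'),
      ← Complex.ofReal_log (exp_pos _).le, log_exp, Complex.ofReal_neg]
  rw [← sigmoid_mul_rexp_neg, Complex.ofReal_mul,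
    Complex.mul_cpow_ofReal_nonneg (sigmoid_pos x).le (exp_pos _).le, hexp, ← mul_assoc,
    ← Complex.cpow_add _ _ hσ, add_sub_cancel, Complex.cpow_one,
    eq_div_iff (by exact_mod_cast (by positivity : (2 * cosh (x / 2)) ≠ 0)), mul_right_comm,
    ← Complex.ofReal_ofNat, ← Complex.ofReal_mul, ← Complex.ofReal_mul,
    sigmoid_mul_two_mul_cosh_half, Complex.ofReal_exp, ← Complex.exp_add]
  push_cast
  ring_nf

theorem Complex.betaIntegral_one_sub (s : ℂ) :
    betaIntegral s (1 - s) = ∫ t : ℝ, exp ((2 * s - 1) * t) / Real.cosh t := by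
  set g : ℝ → ℂ := fun x => exp ((s - 1 / 2) * x) / (2 * Real.cosh (x / 2))
  have hscale : ∫ t : ℝ, g (2 * t) = 2⁻¹ * ∫ x : ℝ, g x := by
    simpa using Measure.integral_comp_mul_left g 2
  calc betaIntegral s (1 - s) = ∫ x : ℝ, g x := by
        simp_rw [betaIntegral_eq_integral_sigmoid, sigmoid_cpow_mul_sigmoid_neg_cpow_one_sub, g]
    _ = ∫ t : ℝ, 2 * g (2 * t) := by rw [integral_const_mul, hscale]; ring
    _ = _ := by
        congr 1 with t
        simp only [g]
        push_cast
        field_simp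

theorem integral_cexp_mul_I_div_cosh (a : ℝ) :
    ∫ t : ℝ, Complex.exp (a * t * Complex.I) / cosh t = π / cosh (π * a / 2) := by
  set s : ℂ := (1 + a * Complex.I) / 2
  have hs : 0 < s.re := by simp [s]
  have hs' : 0 < (1 - s).re := by simp [s]; norm_num
  have hsin : Complex.sin (π * s) = cosh (π * a / 2) := by
    rw [show (π : ℂ) * s = π / 2 + (π * a / 2 : ℝ) * Complex.I by push_cast [s]; ring,
      Complex.sin_add_mul_I, Complex.sin_pi_div_two, Complex.cos_pi_div_two,
      ← Complex.ofReal_cosh]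
    simp
  have hbeta := Complex.betaIntegral_one_sub s
  rw [Complex.betaIntegral_eq_Gamma_mul_div _ _ hs hs', add_sub_cancel, Complex.Gamma_one,
    div_one, Complex.Gamma_mul_Gamma_one_sub, hsin, show 2 * s - 1 = a * Complex.I by ring]
    at hbeta
  rw [hbeta]
  congr 1 with t
  ring_nf

namespace Real

theorem inv_cosh_le_four_mul_inv_one_add_sq (t : ℝ) : (cosh t)⁻¹ ≤ 4 * (1 + t ^ 2)⁻¹ := by
  have hquad := quadratic_le_exp_of_nonneg (abs_nonneg t)
  have hlin := add_one_le_exp (-|t|)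
  rw [sq_abs] at hquad
  rw [← div_eq_mul_inv, le_div_iff₀ (by positivity), ← cosh_abs, cosh_eq]
  field_simp
  nlinarith [exp_pos |t|, exp_pos (-|t|)]

theorem integrable_inv_cosh : Integrable fun t : ℝ => (cosh t)⁻¹ :=
  (integrable_inv_one_add_sq.const_mul 4).mono'
    (continuous_cosh.inv₀ fun t => (cosh_pos t).ne').aestronglyMeasurable
    (ae_of_all _ fun t => by
      rw [norm_of_nonneg (inv_pos.2 (cosh_pos t)).le]
      exact inv_cosh_le_four_mul_inv_one_add_sq t)

theorem integrable_inv_cosh_pow {n : ℕ} (hn : n ≠ 0) :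
    Integrable fun t : ℝ => (cosh t)⁻¹ ^ n :=
  integrable_inv_cosh.mono'
    ((continuous_cosh.inv₀ fun t => (cosh_pos t).ne').pow n).aestronglyMeasurable
    (ae_of_all _ fun t => by
      have h0 := inv_pos.2 (cosh_pos t)
      rw [norm_of_nonneg (by positivity)]
      exact pow_le_of_le_one h0.le (inv_le_one_of_one_le₀ (one_le_cosh t)) hn)

theorem integral_cos_mul_inv_cosh (a : ℝ) :
    ∫ t, cos (a * t) * (cosh t)⁻¹ = π / cosh (π * a / 2) := by
  have hint : Integrable fun t : ℝ => Complex.exp (a * t * Complex.I) / cosh t := by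
    refine ((integrable_inv_cosh.ofReal (𝕜 := ℂ)).bdd_mul
      (f := fun t : ℝ => Complex.exp (a * t * Complex.I)) (c := 1) (by fun_prop)
      (ae_of_all _ fun t => ?_)).congr (ae_of_all _ fun t => ?_)
    · exact_mod_cast (Complex.norm_exp_ofReal_mul_I (a * t)).le
    · simp [div_eq_mul_inv]
  have hre (t : ℝ) :
      RCLike.re (Complex.exp (a * t * Complex.I) / cosh t) = cos (a * t) * (cosh t)⁻¹ := by
    rw [RCLike.re_to_complex, Complex.div_ofReal_re, ← Complex.ofReal_mul,
      Complex.exp_ofReal_mul_I_re, div_eq_mul_inv]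
  have hfourier := congrArg Complex.re (integral_cexp_mul_I_div_cosh a)
  rwa [← RCLike.re_to_complex, ← integral_re hint, ← Complex.ofReal_div, Complex.ofReal_re,
    funext hre] at hfourier

theorem continuous_tanh : Continuous tanh := by
  simp_rw [funext tanh_eq_sinh_div_cosh]
  exact continuous_sinh.div continuous_cosh fun t => (cosh_pos t).ne'

theorem hasDerivAt_tanh (t : ℝ) : HasDerivAt tanh ((cosh t)⁻¹ ^ 2) t := by
  simp_rw [funext tanh_eq_sinh_div_cosh]
  refine ((hasDerivAt_sinh t).div (hasDerivAt_cosh t) (cosh_pos t).ne').congr_deriv ?_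
  rw [← sq, ← sq, cosh_sq_sub_sinh_sq, inv_pow, one_div]

theorem tanh_sq_add_inv_cosh_sq (t : ℝ) : tanh t ^ 2 + (cosh t)⁻¹ ^ 2 = 1 := by
  have := (cosh_pos t).ne'
  rw [tanh_eq_sinh_div_cosh]
  field_simp
  linear_combination -cosh_sq t

theorem hasDerivAt_inv_cosh_pow (n : ℕ) (t : ℝ) :
    HasDerivAt (fun t => (cosh t)⁻¹ ^ n) (-(n * (cosh t)⁻¹ ^ n * tanh t)) t := by
  refine (((hasDerivAt_cosh t).inv (cosh_pos t).ne').pow n).congr_deriv ?_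
  have := (cosh_pos t).ne'
  rcases n with _ | n
  · simp
  · simp only [tanh_eq_sinh_div_cosh, Pi.inv_apply, Nat.add_sub_cancel, pow_succ]
    field_simp

theorem hasDerivAt_inv_cosh_pow_mul_tanh (n : ℕ) (t : ℝ) :
    HasDerivAt (fun t => (cosh t)⁻¹ ^ n * tanh t)
      ((n + 1) * (cosh t)⁻¹ ^ (n + 2) - n * (cosh t)⁻¹ ^ n) t := by
  refine ((hasDerivAt_inv_cosh_pow n t).mul (hasDerivAt_tanh t)).congr_deriv ?_
  rw [pow_add]
  linear_combination -(n * (cosh t)⁻¹ ^ n) * tanh_sq_add_inv_cosh_sq t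

end Real

namespace MeasureTheory.Integrable

variable {μ : Measure ℝ} {f : ℝ → ℝ}

theorem mul_tanh (hf : Integrable f μ) : Integrable (fun t => f t * tanh t) μ :=
  hf.mul_bdd continuous_tanh.aestronglyMeasurable (ae_of_all _ fun t => (abs_tanh_lt_one t).le)

theorem sin_mul (hf : Integrable f μ) (a : ℝ) : Integrable (fun t => sin (a * t) * f t) μ :=
  hf.bdd_mul (by fun_prop) (ae_of_all _ fun t => abs_sin_le_one _)

theorem cos_mul (hf : Integrable f μ) (a : ℝ) : Integrable (fun t => cos (a * t) * f t) μ :=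
  hf.bdd_mul (by fun_prop) (ae_of_all _ fun t => abs_cos_le_one _)

end MeasureTheory.Integrable

section IntegrationByParts

variable {v v' : ℝ → ℝ} (hv : ∀ t, HasDerivAt v (v' t) t) (hvi : Integrable v)
  (hv'i : Integrable v') (a : ℝ)
include hv hvi hv'i

theorem integral_sin_mul_deriv :
    ∫ t, sin (a * t) * v' t = -(a * ∫ t, cos (a * t) * v t) := by
  have hsin (t : ℝ) : HasDerivAt (fun t => sin (a * t)) (a * cos (a * t)) t := by
    simpa [mul_comm] using ((hasDerivAt_id t).const_mul a).sin
  rw [integral_mul_deriv_eq_deriv_mul_of_integrable (fun t _ => hsin t) (fun t _ => hv t)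
    (hv'i.sin_mul a) (by simpa only [Pi.mul_def, mul_assoc] using (hvi.cos_mul a).const_mul a)
    (hvi.sin_mul a), ← integral_const_mul]
  simp only [mul_assoc]

theorem integral_cos_mul_deriv :
    ∫ t, cos (a * t) * v' t = a * ∫ t, sin (a * t) * v t := by
  have hcos (t : ℝ) : HasDerivAt (fun t => cos (a * t)) (-(a * sin (a * t))) t := by
    simpa [mul_comm] using ((hasDerivAt_id t).const_mul a).cos
  rw [integral_mul_deriv_eq_deriv_mul_of_integrable (fun t _ => hcos t) (fun t _ => hv t)
    (hv'i.cos_mul a)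
    (by simpa only [Pi.mul_def, neg_mul, mul_assoc] using (hvi.sin_mul a).const_mul (-a))
    (hvi.cos_mul a), ← integral_const_mul, ← integral_neg]
  simp only [neg_mul, neg_neg, mul_assoc]

end IntegrationByParts

theorem integral_sin_mul_inv_cosh_pow_mul_tanh {n : ℕ} (hn : n ≠ 0) (a : ℝ) :
    ∫ t, sin (a * t) * ((cosh t)⁻¹ ^ n * tanh t)
      = a / n * ∫ t, cos (a * t) * (cosh t)⁻¹ ^ n := by
  have hibp := integral_sin_mul_deriv (hasDerivAt_inv_cosh_pow n) (integrable_inv_cosh_pow hn)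
    (by simpa only [neg_mul, mul_assoc] using
      (integrable_inv_cosh_pow hn).mul_tanh.const_mul (-n)) a
  simp only [mul_neg, integral_neg, neg_inj, mul_assoc, mul_left_comm (sin _) (n : ℝ),
    integral_const_mul] at hibp
  rw [div_mul_eq_mul_div, eq_div_iff (Nat.cast_ne_zero.2 hn), ← hibp, mul_comm]

theorem integral_cos_mul_inv_cosh_pow_add_two {n : ℕ} (hn : n ≠ 0) (a : ℝ) :
    ∫ t, cos (a * t) * (cosh t)⁻¹ ^ (n + 2)
      = (n ^ 2 + a ^ 2) / (n * (n + 1)) * ∫ t, cos (a * t) * (cosh t)⁻¹ ^ n := by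
  have hn2 : n + 2 ≠ 0 := by omega
  have hibp := integral_cos_mul_deriv (hasDerivAt_inv_cosh_pow_mul_tanh n)
    (integrable_inv_cosh_pow hn).mul_tanh
    (((integrable_inv_cosh_pow hn2).const_mul _).sub ((integrable_inv_cosh_pow hn).const_mul _)) a
  simp only [mul_sub, mul_left_comm (cos _)] at hibp
  rw [integral_sub (((integrable_inv_cosh_pow hn2).cos_mul a).const_mul _)
    (((integrable_inv_cosh_pow hn).cos_mul a).const_mul _), integral_const_mul,
    integral_const_mul, integral_sin_mul_inv_cosh_pow_mul_tanh hn] at hibp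
  generalize ∫ t, cos (a * t) * (cosh t)⁻¹ ^ (n + 2) = J at hibp ⊢
  generalize ∫ t, cos (a * t) * (cosh t)⁻¹ ^ n = I at hibp ⊢
  have : (n : ℝ) ≠ 0 := Nat.cast_ne_zero.2 hn
  field_simp at hibp ⊢
  linear_combination hibp

/-- For every real a, ∫ sech³(t)·tanh(t)·sin(a t) dt over ℝ equals
π·a·(1 + a²)/(6·cosh(πa/2)). -/
theorem integral_sech_cube_tanh_sin (a : ℝ) :
    ∫ t : ℝ, (1 / Real.cosh t) ^ 3 * Real.tanh t * Real.sin (a * t)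
      = Real.pi * a * (1 + a ^ 2) / (6 * Real.cosh (Real.pi * a / 2)) := by
  calc ∫ t : ℝ, (1 / cosh t) ^ 3 * tanh t * sin (a * t)
      = ∫ t, sin (a * t) * ((cosh t)⁻¹ ^ 3 * tanh t) := by
        congr 1 with t
        rw [one_div]
        ring
    _ = a / 3 * ∫ t, cos (a * t) * (cosh t)⁻¹ ^ (1 + 2) :=
        integral_sin_mul_inv_cosh_pow_mul_tanh three_ne_zero a
    _ = a / 3 * ((1 + a ^ 2) / 2 * ∫ t, cos (a * t) * (cosh t)⁻¹) := by
        rw [integral_cos_mul_inv_cosh_pow_add_two one_ne_zero]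
        norm_num
    _ = π * a * (1 + a ^ 2) / (6 * cosh (π * a / 2)) := by
        rw [integral_cos_mul_inv_cosh]
        field_simp
        ring
end

section
/- Every nonconstant periodic solution t ↦ (x(t), y(t)) of the unperturbed system ẋ = y, ẏ = x − x³ whose energy h = H(x(0), y(0)) satisfies −1/4 < h < 0 has minimal period T > √2·π; equivalently, the frequency ω = 2π/T of self-excited oscillations in the domains G₁± inside the figure-eight satisfies 0 < ω < √2. Consequently, only resonance levels ω = p₄/p with p > p₄/√2 can occur in G₁±. -/
open Real Set intervalIntegral

theorem Complex.eq_mul_exp_integral_of_hasDerivAt {w : ℝ → ℂ} {a : ℝ → ℝ} (ha : Continuous a)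
    (hw : ∀ t, HasDerivAt w (a t * Complex.I * w t) t) (s t : ℝ) :
    w t = w s * Complex.exp ((∫ τ in s..t, a τ) * Complex.I) := by
  set A : ℝ → ℂ := fun τ => ((∫ σ in s..τ, a σ : ℝ) : ℂ)
  have hA : ∀ τ, HasDerivAt A (a τ) τ := fun τ =>
    (ha.integral_hasStrictDerivAt s τ).hasDerivAt.ofReal_comp
  have hconst : ∀ τ, w τ * Complex.exp (-A τ * Complex.I) = w s := by
    intro τ
    have hderiv : ∀ σ, HasDerivAt (fun σ => w σ * Complex.exp (-A σ * Complex.I)) 0 σ := by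
      intro σ
      exact ((hw σ).fun_mul ((hA σ).fun_neg.mul_const Complex.I).cexp).congr_deriv (by ring)
    simpa [A] using is_const_of_deriv_eq_zero (fun σ => (hderiv σ).differentiableAt)
      (fun σ => (hderiv σ).deriv) τ s
  rw [← hconst t, mul_assoc, ← Complex.exp_add]
  simp [A]

theorem two_pi_le_integral_of_hasDerivAt_eq_mul_I {w : ℝ → ℂ} {a : ℝ → ℝ} (ha : Continuous a)
    (hw : ∀ t, HasDerivAt w (a t * Complex.I * w t) t) {s t : ℝ} (hst : s < t)
    (ha_pos : ∀ τ ∈ Ioo s t, 0 < a τ) (hws : w s ≠ 0) (hwt : w t = w s) :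
    2 * π ≤ ∫ τ in s..t, a τ := by
  have hpos : 0 < ∫ τ in s..t, a τ :=
    intervalIntegral_pos_of_pos_on (ha.intervalIntegrable s t) ha_pos hst
  have hexp : Complex.exp ((∫ τ in s..t, a τ) * Complex.I) = 1 := by
    have h := Complex.eq_mul_exp_integral_of_hasDerivAt ha hw s t
    rwa [hwt, eq_comm, mul_eq_left₀ hws] at h
  obtain ⟨n, hn⟩ := Complex.exp_eq_one_iff.mp hexp
  have hn' : ∫ τ in s..t, a τ = n * (2 * π) := by simpa using congrArg Complex.im hn
  have hn_pos : (0 : ℝ) < n := by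
    rw [hn'] at hpos
    exact pos_of_mul_pos_left hpos (by positivity)
  have hn_one : (1 : ℝ) ≤ n := by exact_mod_cast (show (0 : ℤ) < n by exact_mod_cast hn_pos)
  rw [hn']
  nlinarith [pi_pos]

theorem forall_pos_or_forall_neg_of_ne_zero {f : ℝ → ℝ} (hf : Continuous f)
    (h0 : ∀ t, f t ≠ 0) : (∀ t, 0 < f t) ∨ ∀ t, f t < 0 := by
  by_contra! h
  obtain ⟨⟨a, ha⟩, ⟨b, hb⟩⟩ := h
  obtain ⟨c, hc⟩ := mem_range_of_exists_le_of_exists_ge hf ⟨a, ha⟩ ⟨b, hb⟩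
  exact h0 c hc

theorem H_eq_sq_add_sq_sub (a b : ℝ) : H a b = b ^ 2 / 2 + (1 - a ^ 2) ^ 2 / 4 - 1 / 4 := by
  unfold H; ring

theorem H_neg_neg (a b : ℝ) : H (-a) (-b) = H a b := by
  unfold H; ring

theorem ne_zero_of_H_neg {a b : ℝ} (h : H a b < 0) : a ≠ 0 := by
  rintro rfl
  rw [H_eq_sq_add_sq_sub] at h
  nlinarith [sq_nonneg b]

theorem le_one_sub_half_sub_cube {a : ℝ} (ha : -2 ≤ a) : a ≤ 1 - (a - a ^ 3) / 2 := by
  nlinarith [mul_nonneg (sq_nonneg (a - 1)) (show 0 ≤ a + 2 by linarith)]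

theorem lt_one_sub_half_sub_cube {a : ℝ} (ha : -2 < a) (ha1 : a ≠ 1) :
    a < 1 - (a - a ^ 3) / 2 := by
  nlinarith [mul_pos (pow_pos (abs_pos.2 (sub_ne_zero.2 ha1)) 2) (show 0 < a + 2 by linarith),
    sq_abs (a - 1)]

noncomputable def angleCoord (a b : ℝ) : ℂ :=
  ((1 - a ^ 2 : ℝ) : ℂ) + ((√2 * b : ℝ) : ℂ) * Complex.I

theorem angleCoord_ne_zero {a b : ℝ} (h : H a b ≠ -1 / 4) : angleCoord a b ≠ 0 := by
  intro h0
  simp only [angleCoord, Complex.ext_iff, Complex.add_re, Complex.add_im, Complex.ofReal_re,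
    Complex.ofReal_im, Complex.mul_re, Complex.mul_im, Complex.I_re, Complex.I_im,
    Complex.zero_re, Complex.zero_im] at h0
  have hre : 1 - a ^ 2 = 0 := by linarith [h0.1]
  have him : b = 0 := by nlinarith [h0.2, Real.sqrt_pos.2 (zero_lt_two' ℝ)]
  apply h
  rw [H_eq_sq_add_sq_sub, hre, him]
  norm_num

section Solution

variable {x y : ℝ → ℝ} (hx : ∀ t, HasDerivAt x (y t) t)
  (hy : ∀ t, HasDerivAt y (x t - x t ^ 3) t)
include hx hy

theorem H_conserved (s t : ℝ) : H (x t) (y t) = H (x s) (y s) := by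
  have hderiv : ∀ t, HasDerivAt (fun t => H (x t) (y t)) 0 t := fun t =>
    ((((hy t).pow 2).div_const 2).sub (((hx t).pow 2).div_const 2)).add
      (((hx t).pow 4).div_const 4) |>.congr_deriv (by push_cast; ring)
  exact is_const_of_deriv_eq_zero (fun t => (hderiv t).differentiableAt)
    (fun t => (hderiv t).deriv) t s

theorem hasDerivAt_angleCoord (t : ℝ) :
    HasDerivAt (fun t => angleCoord (x t) (y t))
      ((√2 * x t : ℝ) * Complex.I * angleCoord (x t) (y t)) t := by
  have hu := (((hx t).pow 2).const_sub 1).ofReal_comp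
  have hv := (((hy t).const_mul √2).ofReal_comp).mul_const Complex.I
  refine (hu.add hv).congr_deriv ?_
  have hs : (√2 : ℂ) ^ 2 = 2 := by exact_mod_cast Real.sq_sqrt zero_le_two
  simp only [angleCoord]
  push_cast
  linear_combination (-(x t : ℂ) * y t * Complex.I ^ 2) * hs - 2 * x t * y t * Complex.I_sq

theorem exists_mem_Ioo_ne_one {s t : ℝ} (hst : s < t) (hH : H (x s) (y s) ≠ -1 / 4) :
    ∃ c ∈ Ioo s t, x c ≠ 1 := by
  by_contra! h
  obtain ⟨c, hc⟩ := nonempty_Ioo.2 hst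
  have hx_const : x =ᶠ[nhds c] fun _ => 1 :=
    Filter.eventuallyEq_of_mem (isOpen_Ioo.mem_nhds hc) h
  have hyc : y c = 0 := (hx c).unique ((hasDerivAt_const c 1).congr_of_eventuallyEq hx_const)
  apply hH
  rw [← H_conserved hx hy s c, h c hc, hyc]
  norm_num [H]

theorem sqrt_two_mul_pi_lt_of_pos {T : ℝ} (hT : 0 < T) (hxT : x T = x 0) (hyT : y T = y 0)
    (hH : H (x 0) (y 0) ≠ -1 / 4) (hpos : ∀ t, 0 < x t) : √2 * π < T := by
  have cx : Continuous x := continuous_iff_continuousAt.2 fun t => (hx t).continuousAt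
  have hangle : 2 * π ≤ ∫ t in (0)..T, √2 * x t :=
    two_pi_le_integral_of_hasDerivAt_eq_mul_I (continuous_const.mul cx)
      (hasDerivAt_angleCoord hx hy) hT (fun t _ => mul_pos (by positivity) (hpos t))
      (angleCoord_ne_zero hH) (by rw [hxT, hyT])
  have hy_int : ∫ t in (0)..T, (x t - x t ^ 3) = 0 := by
    rw [integral_eq_sub_of_hasDerivAt (fun t _ => hy t)
      ((cx.sub (cx.pow 3)).intervalIntegrable 0 T), hyT, sub_self]
  have hx_lt : ∫ t in (0)..T, x t < ∫ t in (0)..T, (1 - (x t - x t ^ 3) / 2) := by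
    obtain ⟨c, hc, hc1⟩ := exists_mem_Ioo_ne_one hx hy hT hH
    exact integral_lt_integral_of_continuousOn_of_le_of_exists_lt hT cx.continuousOn
      (by fun_prop) (fun t _ => le_one_sub_half_sub_cube (by linarith [hpos t]))
      ⟨c, Ioo_subset_Icc_self hc, lt_one_sub_half_sub_cube (by linarith [hpos c]) hc1⟩
  have hT_eq : ∫ t in (0)..T, (1 - (x t - x t ^ 3) / 2) = T := by
    have hint : IntervalIntegrable (fun t => (x t - x t ^ 3) / 2) MeasureTheory.volume 0 T :=
      (by fun_prop : Continuous fun t => (x t - x t ^ 3) / 2).intervalIntegrable 0 T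
    rw [integral_sub intervalIntegrable_const hint, intervalIntegral.integral_div, hy_int]
    simp
  rw [intervalIntegral.integral_const_mul] at hangle
  have hx_ge : √2 * π ≤ ∫ t in (0)..T, x t := by
    nlinarith [Real.sq_sqrt zero_le_two, Real.sqrt_nonneg 2]
  linarith

theorem sqrt_two_mul_pi_lt_period {T : ℝ} (hT : 0 < T) (hxT : x T = x 0) (hyT : y T = y 0)
    (hh₁ : -1 / 4 < H (x 0) (y 0)) (hh₂ : H (x 0) (y 0) < 0) : √2 * π < T := by
  have cx : Continuous x := continuous_iff_continuousAt.2 fun t => (hx t).continuousAt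
  have hx_ne : ∀ t, x t ≠ 0 := fun t =>
    ne_zero_of_H_neg (by rwa [H_conserved hx hy 0 t])
  rcases forall_pos_or_forall_neg_of_ne_zero cx hx_ne with hpos | hneg
  · exact sqrt_two_mul_pi_lt_of_pos hx hy hT hxT hyT hh₁.ne' hpos
  · exact sqrt_two_mul_pi_lt_of_pos (x := fun t => -x t) (y := fun t => -y t)
      (fun t => (hx t).neg) (fun t => (hy t).neg.congr_deriv (by ring)) hT
      (by rw [hxT]) (by rw [hyT]) (by rw [H_neg_neg]; exact hh₁.ne')
      (fun t => neg_pos.2 (hneg t))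

end Solution

theorem period_inside_loops_general (x y : ℝ → ℝ)
    (hx : ∀ t, HasDerivAt x (y t) t)
    (hy : ∀ t, HasDerivAt y (x t - (x t) ^ 3) t)
    (T : ℝ) (hT : 0 < T)
    (hper : ∀ t, x (t + T) = x t ∧ y (t + T) = y t)
    (hh₁ : -1/4 < H (x 0) (y 0)) (hh₂ : H (x 0) (y 0) < 0) :
    Real.sqrt 2 * Real.pi < T ∧
    (0 < 2 * Real.pi / T ∧ 2 * Real.pi / T < Real.sqrt 2) ∧
    (∀ p₄ : ℝ, 0 < p₄ → ∀ p : ℕ, 0 < p →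
      2 * Real.pi / T = p₄ / p → p₄ / Real.sqrt 2 < (p : ℝ)) := by
  have hperiod : √2 * π < T := sqrt_two_mul_pi_lt_period hx hy hT
    (by simpa using (hper 0).1) (by simpa using (hper 0).2) hh₁ hh₂
  have hfreq : 2 * π / T < √2 := by
    rw [div_lt_iff₀ hT]
    nlinarith [Real.sq_sqrt zero_le_two, Real.sqrt_pos.2 (zero_lt_two' ℝ)]
  refine ⟨hperiod, ⟨by positivity, hfreq⟩, fun p₄ _ p hp hres => ?_⟩
  rw [hres, div_lt_iff₀ (by exact_mod_cast hp)] at hfreq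
  rw [div_lt_iff₀ (Real.sqrt_pos.2 zero_lt_two)]
  linarith

/-- Every nonconstant periodic solution of ẋ = y, ẏ = x − x³ with energy in (−1/4, 0)
(i.e. inside a loop of the figure-eight) has minimal period T > √2π; equivalently the
frequency ω = 2π/T satisfies 0 < ω < √2, so only resonance levels ω = p₄/p with
p > p₄/√2 can occur. -/
theorem period_inside_loops (x y : ℝ → ℝ)
    (hx : ∀ t, HasDerivAt x (y t) t)
    (hy : ∀ t, HasDerivAt y (x t - (x t) ^ 3) t)
    (T : ℝ) (hT : 0 < T)
    (hper : ∀ t, x (t + T) = x t ∧ y (t + T) = y t)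
    (hmin : ∀ T', 0 < T' → (∀ t, x (t + T') = x t ∧ y (t + T') = y t) → T ≤ T')
    (hnc : ∃ t₁ t₂, (x t₁, y t₁) ≠ (x t₂, y t₂))
    (hh₁ : -1/4 < H (x 0) (y 0)) (hh₂ : H (x 0) (y 0) < 0) :
    Real.sqrt 2 * Real.pi < T ∧
    (0 < 2 * Real.pi / T ∧ 2 * Real.pi / T < Real.sqrt 2) ∧
    (∀ p₄ : ℝ, 0 < p₄ → ∀ p : ℕ, 0 < p →
      2 * Real.pi / T = p₄ / p → p₄ / Real.sqrt 2 < (p : ℝ)) :=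
  period_inside_loops_general x y hx hy T hT hper hh₁ hh₂
end
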